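/- arXiv:0705.3415 — 2 statements merged into one kernel-verified Lean document; each statement's English description precedes it below -/
import Mathlib

section
/- For every C¹ loop c : [0,1] → ℝ² ∖ {(0,0)} with c(0) = c(1), the work of the vortex 1-form along c is an integer multiple of 2π: W(c,f) ∈ 2πℤ. -/
/-!
Identify the plane with `ℂ` and write the loop as `z = x + i y`. The vortex form evaluated along `z`
is `Im (z' / z)`. A primitive `g` of the logarithmic derivative `z' / z` satisfies
`(z e^{-g})' = 0`, so `e^{g(1) - g(0)} = z(1) / z(0) = 1`; hence `g(1) - g(0) ∈ 2πiℤ`, and its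
imaginary part, the work, lies in `2πℤ`.
-/

open Real Complex Set intervalIntegral

theorem ContDiff.continuousOn_logDeriv {𝕜 𝕜' : Type*} [NontriviallyNormedField 𝕜]
    [NontriviallyNormedField 𝕜'] [NormedAlgebra 𝕜 𝕜'] {f : 𝕜 → 𝕜'} {s : Set 𝕜}
    (hf : ContDiff 𝕜 1 f) (hf0 : ∀ x ∈ s, f x ≠ 0) : ContinuousOn (logDeriv f) s :=
  (hf.continuous_deriv le_rfl).continuousOn.div hf.continuous.continuousOn hf0

section LogDeriv

variable {z : ℝ → ℂ} {a b : ℝ}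

theorem hasDerivWithinAt_integral_logDeriv (hz : ContDiff ℝ 1 z) (hz0 : ∀ t ∈ Icc a b, z t ≠ 0)
    {u : ℝ} (hu : u ∈ Ico a b) :
    HasDerivWithinAt (fun v => ∫ t in a..v, logDeriv z t) (logDeriv z u) (Ici u) u :=
  integral_hasDerivWithinAt_right (t := Ioi u)
    (((hz.continuousOn_logDeriv hz0).mono
      (Icc_subset_Icc_right hu.2.le)).intervalIntegrable_of_Icc hu.1)
    ((hz.continuous_deriv le_rfl).measurable.div
      hz.continuous.measurable).aestronglyMeasurable.stronglyMeasurableAtFilter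
    ((hz.continuous_deriv le_rfl).continuousAt.div hz.continuous.continuousAt
      (hz0 u ⟨hu.1, hu.2.le⟩)).continuousWithinAt

theorem exp_integral_logDeriv (hz : ContDiff ℝ 1 z) (hab : a ≤ b)
    (hz0 : ∀ t ∈ Icc a b, z t ≠ 0) : exp (∫ t in a..b, logDeriv z t) = z b / z a := by
  set g : ℝ → ℂ := fun u => ∫ t in a..u, logDeriv z t
  have hg_cont : ContinuousOn g (Icc a b) := by
    simpa only [uIcc_of_le hab] using
      continuousOn_primitive_interval (μ := MeasureTheory.volume) (a := a) (b := b)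
        (by simpa only [uIcc_of_le hab] using (hz.continuousOn_logDeriv hz0).integrableOn_Icc)
  -- `z e^{-g}` has derivative `z' e^{-g} - z (z'/z) e^{-g} = 0`.
  have hconst := constant_of_has_deriv_right_zero (f := fun u => z u * exp (-g u))
    (hz.continuous.continuousOn.mul (continuous_exp.comp_continuousOn hg_cont.neg))
    (fun t ht => by
      refine (((hz.differentiable one_ne_zero t).hasDerivAt.hasDerivWithinAt).mul
        (hasDerivWithinAt_integral_logDeriv hz hz0 ht).neg.cexp).congr_deriv ?_
      rw [logDeriv_apply]
      field_simp [hz0 t ⟨ht.1, ht.2.le⟩]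
      ring)
    b (right_mem_Icc.2 hab)
  simp only [g, integral_same, neg_zero, Complex.exp_zero, mul_one, Complex.exp_neg] at hconst
  rw [← hconst, div_mul_eq_div_div, div_self (hz0 b (right_mem_Icc.2 hab)), one_div, inv_inv]

theorem exists_integral_im_logDeriv_eq_two_pi_mul (hz : ContDiff ℝ 1 z) (hab : a ≤ b)
    (hz0 : ∀ t ∈ Icc a b, z t ≠ 0) (hloop : z a = z b) :
    ∃ n : ℤ, ∫ t in a..b, (logDeriv z t).im = 2 * π * n := by
  have hexp : exp (∫ t in a..b, logDeriv z t) = 1 := by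
    rw [exp_integral_logDeriv hz hab hz0, hloop, div_self (hloop ▸ hz0 a (left_mem_Icc.2 hab))]
  obtain ⟨n, hn⟩ := exp_eq_one_iff.1 hexp
  refine ⟨n, ?_⟩
  have hint : IntervalIntegrable (logDeriv z) MeasureTheory.volume a b :=
    (hz.continuousOn_logDeriv hz0).intervalIntegrable_of_Icc hab
  calc ∫ t in a..b, (logDeriv z t).im
      = (∫ t in a..b, logDeriv z t).im := imCLM.intervalIntegral_comp_comm hint
    _ = 2 * π * n := by rw [hn, mul_comm]; simp

end LogDeriv

theorem vortex_form_apply_eq_im_div (w v : ℂ) :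
    -w.im / (w.re ^ 2 + w.im ^ 2) * v.re + w.re / (w.re ^ 2 + w.im ^ 2) * v.im = (v / w).im := by
  rw [div_im, normSq_apply]
  ring

theorem hasDerivAt_ofReal_add_ofReal_mul_I {x y : ℝ → ℝ} {t : ℝ}
    (hx : DifferentiableAt ℝ x t) (hy : DifferentiableAt ℝ y t) :
    HasDerivAt (fun s => (x s : ℂ) + y s * I) (deriv x t + deriv y t * I) t :=
  hx.hasDerivAt.ofReal_comp.add (hy.hasDerivAt.ofReal_comp.mul_const I)

/-- The work of the vortex 1-form `f_x = -y/(x²+y²)`, `f_y = x/(x²+y²)` along any C¹ loop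
`c : [0,1] → ℝ² ∖ {(0,0)}` with `c 0 = c 1` is an integer multiple of `2π`. -/
theorem work_of_vortex_form_along_loop_mem_zmultiples_two_pi
    (c : ℝ → ℝ × ℝ) (hc : ContDiff ℝ 1 c)
    (hc0 : ∀ t ∈ Set.Icc (0 : ℝ) 1, c t ≠ (0, 0))
    (hloop : c 0 = c 1) :
    ∃ n : ℤ,
      ∫ t in (0 : ℝ)..1,
        ((-(c t).2 / ((c t).1 ^ 2 + (c t).2 ^ 2)) * deriv (fun s => (c s).1) t +
         ((c t).1 / ((c t).1 ^ 2 + (c t).2 ^ 2)) * deriv (fun s => (c s).2) t)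
      = 2 * π * n := by
  have hx : ContDiff ℝ 1 fun t => (c t).1 := contDiff_fst.comp hc
  have hy : ContDiff ℝ 1 fun t => (c t).2 := contDiff_snd.comp hc
  set z : ℝ → ℂ := fun t => ((c t).1 : ℂ) + (c t).2 * I
  have hz : ContDiff ℝ 1 z :=
    (ofRealCLM.contDiff.comp hx).add ((ofRealCLM.contDiff.comp hy).mul contDiff_const)
  have hz0 : ∀ t ∈ Icc (0 : ℝ) 1, z t ≠ 0 := fun t ht hzt =>
    hc0 t ht (Prod.ext (by simpa [z] using congrArg re hzt) (by simpa [z] using congrArg im hzt))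
  obtain ⟨n, hn⟩ := exists_integral_im_logDeriv_eq_two_pi_mul hz zero_le_one hz0 (by simp [z, hloop])
  refine ⟨n, Eq.trans (integral_congr fun t _ => ?_) hn⟩
  rw [logDeriv_apply, (hasDerivAt_ofReal_add_ofReal_mul_I (hx.differentiable one_ne_zero t)
    (hy.differentiable one_ne_zero t)).deriv, ← vortex_form_apply_eq_im_div]
  simp [z]
end

section
/- Uniqueness of analytic continuation along a path: let γ : [0,1] → ℂ be a path with γ(0) = a and γ(1) = b, and let {(f_t, D_t) : t ∈ [0,1]} and {(g_t, B_t) : t ∈ [0,1]} be two analytic continuations along γ (each D_t and B_t an open set containing γ(t), each f_t analytic on D_t and g_t analytic on B_t, and for every t there is δ > 0 such that |s−t| < δ implies γ(s) ∈ D_t and f_s agrees with f_t on a neighborhood of γ(s), and similarly for g). If f₀ and g₀ agree on a neighborhood of a, then f₁ and g₁ agree on a neighborhood of b. -/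
open Set

/-- A family `(f t, D t)`, `t ∈ [0,1]`, of function elements (each `D t` a region, i.e. an
open connected subset of `ℂ`, with `f t` analytic on `D t`) is an analytic continuation
along the path `γ` if `γ t ∈ D t` for all `t` and for each `t` there is `δ > 0` such that
`|s - t| < δ` implies `γ s ∈ D t` and the germ of `f s` at `γ s` equals the germ of `f t`
at `γ s` (i.e. they agree on a neighborhood of `γ s`). -/
def IsAnalyticContinuationAlong (γ : ℝ → ℂ) (D : ℝ → Set ℂ) (f : ℝ → ℂ → ℂ) : Prop :=
  (∀ t ∈ Set.Icc (0 : ℝ) 1,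
      IsOpen (D t) ∧ IsConnected (D t) ∧ γ t ∈ D t ∧ AnalyticOn ℂ (f t) (D t)) ∧
  ∀ t ∈ Set.Icc (0 : ℝ) 1, ∃ δ > (0 : ℝ), ∀ s ∈ Set.Icc (0 : ℝ) 1, |s - t| < δ →
    γ s ∈ D t ∧ ∃ V ∈ nhds (γ s), Set.EqOn (f s) (f t) V

lemma spread_aux {O : Set ℂ} (hO : IsOpen O) {F G : ℂ → ℂ}
    (hF : AnalyticOnNhd ℂ F O) (hG : AnalyticOnNhd ℂ G O)
    {K : Set ℂ} (hK : IsPreconnected K) (hKO : K ⊆ O) {x y : ℂ}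
    (hx : x ∈ K) (hy : y ∈ K)
    (h : ∃ V ∈ nhds x, Set.EqOn F G V) : ∃ V ∈ nhds y, Set.EqOn F G V := by
  obtain ⟨V, hV, hVeq⟩ := h
  set C := connectedComponentIn O x with hC
  have hCO : C ⊆ O := connectedComponentIn_subset O x
  have hCopen : IsOpen C := hO.connectedComponentIn
  have hKC : K ⊆ C := hK.subset_connectedComponentIn hx hKO
  have heq : Set.EqOn F G C := by
    refine AnalyticOnNhd.eqOn_of_preconnected_of_eventuallyEq
      (hF.mono hCO) (hG.mono hCO) isPreconnected_connectedComponentIn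
      (mem_connectedComponentIn (hKO hx)) ?_
    exact Filter.eventuallyEq_of_mem hV hVeq
  exact ⟨C, hCopen.mem_nhds (hKC hy), heq⟩


/-- Uniqueness of analytic continuation along a path: if `{(f t, D t)}` and `{(g t, B t)}`
are analytic continuations along a path `γ : [0,1] → ℂ` from `a = γ 0` to `b = γ 1`, and
`f 0` and `g 0` agree on a neighborhood of `a`, then `f 1` and `g 1` agree on a
neighborhood of `b`. -/
theorem analytic_continuation_unique
    (γ : ℝ → ℂ) (hγ : ContinuousOn γ (Set.Icc 0 1))
    (a b : ℂ) (ha : γ 0 = a) (hb : γ 1 = b)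
    (D B : ℝ → Set ℂ) (f g : ℝ → ℂ → ℂ)
    (hf : IsAnalyticContinuationAlong γ D f)
    (hg : IsAnalyticContinuationAlong γ B g)
    (h0 : ∃ V ∈ nhds a, Set.EqOn (f 0) (g 0) V) :
    ∃ V ∈ nhds b, Set.EqOn (f 1) (g 1) V := by
  set good : ℝ → Prop := fun t => ∃ V ∈ nhds (γ t), Set.EqOn (f t) (g t) V with hgood
  -- the key local lemma
  have main : ∀ t ∈ Set.Icc (0 : ℝ) 1, ∃ δ > (0 : ℝ), ∀ s ∈ Set.Icc (0 : ℝ) 1,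
      |s - t| < δ → (good t ↔ good s) := by
    intro t ht
    obtain ⟨δ₁, hδ₁, hf2⟩ := hf.2 t ht
    obtain ⟨δ₂, hδ₂, hg2⟩ := hg.2 t ht
    refine ⟨min δ₁ δ₂, lt_min hδ₁ hδ₂, fun s hs hst => ?_⟩
    have hst1 : |s - t| < δ₁ := hst.trans_le (min_le_left _ _)
    have hst2 : |s - t| < δ₂ := hst.trans_le (min_le_right _ _)
    -- set-up for spread_aux
    obtain ⟨hDopen, _, _, hDan⟩ := hf.1 t ht
    obtain ⟨hBopen, _, _, hBan⟩ := hg.1 t ht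
    have hO : IsOpen (D t ∩ B t) := hDopen.inter hBopen
    have huIcc : Set.uIcc t s ⊆ Set.Icc (0 : ℝ) 1 := by
      rw [Set.uIcc_eq_union]
      exact Set.union_subset (Set.Icc_subset_Icc ht.1 hs.2) (Set.Icc_subset_Icc hs.1 ht.2)
    have hmid : ∀ u ∈ Set.uIcc t s, γ u ∈ D t ∩ B t := by
      intro u hu
      have hu' : u ∈ Set.Icc (0 : ℝ) 1 := huIcc hu
      have habs : |u - t| ≤ |s - t| := by
        rw [Set.uIcc_eq_union] at hu
        rcases hu with hu | hu
        · rw [abs_of_nonneg (by linarith [hu.1]), abs_of_nonneg (by linarith [hu.1, hu.2])]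
          linarith [hu.2]
        · rw [abs_of_nonpos (by linarith [hu.2]), abs_of_nonpos (by linarith [hu.1, hu.2])]
          linarith [hu.1]
      exact ⟨(hf2 u hu' (habs.trans_lt hst1)).1, (hg2 u hu' (habs.trans_lt hst2)).1⟩
    set K := γ '' Set.uIcc t s with hK
    have hKconn : IsPreconnected K :=
      (isPreconnected_uIcc).image γ (hγ.mono huIcc)
    have hKO : K ⊆ D t ∩ B t := by rintro _ ⟨u, hu, rfl⟩; exact hmid u hu
    have hxK : γ t ∈ K := ⟨t, Set.left_mem_uIcc, rfl⟩
    have hyK : γ s ∈ K := ⟨s, Set.right_mem_uIcc, rfl⟩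
    have hFan : AnalyticOnNhd ℂ (f t) (D t ∩ B t) :=
      ((hDopen.analyticOn_iff_analyticOnNhd.1 hDan).mono Set.inter_subset_left)
    have hGan : AnalyticOnNhd ℂ (g t) (D t ∩ B t) :=
      ((hBopen.analyticOn_iff_analyticOnNhd.1 hBan).mono Set.inter_subset_right)
    -- germ transfers at γ s
    obtain ⟨Vf, hVf, hVfeq⟩ := (hf2 s hs hst1).2
    obtain ⟨Vg, hVg, hVgeq⟩ := (hg2 s hs hst2).2
    constructor
    · rintro hgt
      obtain ⟨W, hW, hWeq⟩ :=
        spread_aux hO hFan hGan hKconn hKO hxK hyK hgt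
      refine ⟨Vf ∩ Vg ∩ W, Filter.inter_mem (Filter.inter_mem hVf hVg) hW, ?_⟩
      intro x hx
      calc f s x = f t x := hVfeq hx.1.1
        _ = g t x := hWeq hx.2
        _ = g s x := (hVgeq hx.1.2).symm
    · rintro ⟨W, hW, hWeq⟩
      have hs' : ∃ V ∈ nhds (γ s), Set.EqOn (f t) (g t) V := by
        refine ⟨Vf ∩ Vg ∩ W, Filter.inter_mem (Filter.inter_mem hVf hVg) hW, ?_⟩
        intro x hx
        calc f t x = f s x := (hVfeq hx.1.1).symm
          _ = g s x := hWeq hx.2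
          _ = g t x := hVgeq hx.1.2
      exact spread_aux hO hFan hGan hKconn hKO hyK hxK hs'
  choose! δ hδpos hδ using main
  have hgood0 : good 0 := by simp only [hgood]; rw [ha]; exact h0
  have h01 : (0:ℝ) ∈ Set.Icc (0:ℝ) 1 := ⟨le_refl _, zero_le_one⟩
  have h11 : (1:ℝ) ∈ Set.Icc (0:ℝ) 1 := ⟨zero_le_one, le_refl _⟩
  have hgood1 : good 1 := by
    by_contra hbad
    set U := ⋃ (t : ℝ) (_ : t ∈ Set.Icc (0:ℝ) 1 ∧ good t), Metric.ball t (δ t) with hU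
    set V := ⋃ (t : ℝ) (_ : t ∈ Set.Icc (0:ℝ) 1 ∧ ¬ good t), Metric.ball t (δ t) with hV
    have hUopen : IsOpen U := isOpen_iUnion fun t => isOpen_iUnion fun _ => Metric.isOpen_ball
    have hVopen : IsOpen V := isOpen_iUnion fun t => isOpen_iUnion fun _ => Metric.isOpen_ball
    have hcover : Set.Icc (0:ℝ) 1 ⊆ U ∪ V := by
      intro t ht
      by_cases h : good t
      · exact Or.inl (Set.mem_iUnion₂.2 ⟨t, ⟨ht, h⟩, Metric.mem_ball_self (hδpos t ht)⟩)
      · exact Or.inr (Set.mem_iUnion₂.2 ⟨t, ⟨ht, h⟩, Metric.mem_ball_self (hδpos t ht)⟩)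
    have hUne : (Set.Icc (0:ℝ) 1 ∩ U).Nonempty :=
      ⟨0, h01, Set.mem_iUnion₂.2 ⟨0, ⟨h01, hgood0⟩, Metric.mem_ball_self (hδpos 0 h01)⟩⟩
    have hVne : (Set.Icc (0:ℝ) 1 ∩ V).Nonempty :=
      ⟨1, h11, Set.mem_iUnion₂.2 ⟨1, ⟨h11, hbad⟩, Metric.mem_ball_self (hδpos 1 h11)⟩⟩
    obtain ⟨x, hxI, hxU, hxV⟩ := isPreconnected_Icc U V hUopen hVopen hcover hUne hVne
    obtain ⟨t₁, ⟨ht₁I, ht₁g⟩, hxt₁⟩ := Set.mem_iUnion₂.1 hxU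
    obtain ⟨t₂, ⟨ht₂I, ht₂g⟩, hxt₂⟩ := Set.mem_iUnion₂.1 hxV
    have h1 : good x := (hδ t₁ ht₁I x hxI (by simpa [Real.dist_eq] using hxt₁)).1 ht₁g
    have h2 : good x → good t₂ := fun h =>
      (hδ t₂ ht₂I x hxI (by simpa [Real.dist_eq] using hxt₂)).2 h
    exact ht₂g (h2 h1)
  simp only [hgood] at hgood1; rw [hb] at hgood1
  exact hgood1
end
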